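/- Let g be holomorphic on the unit disc. For every m ∈ ℕ₀ and every holomorphic f on the disc with f(0) = 0, T_g S_g^m f = (S_g − T_g)^m T_g f. -/

import Mathlib

open MeasureTheory Metric

/-- The analytic paraproduct `T_g f (z) = ∫₀^z f(ζ) g'(ζ) dζ`, realized by
integrating along the segment from `0` to `z`. -/
noncomputable def Tg (g f : ℂ → ℂ) : ℂ → ℂ :=
  fun z => z * ∫ t in (0:ℝ)..1, f ((t : ℂ) * z) * deriv g ((t : ℂ) * z)

/-- The analytic paraproduct `S_g f (z) = ∫₀^z f'(ζ) g(ζ) dζ`, realized by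
integrating along the segment from `0` to `z`. -/
noncomputable def Sg (g f : ℂ → ℂ) : ℂ → ℂ :=
  fun z => z * ∫ t in (0:ℝ)..1, deriv f ((t : ℂ) * z) * g ((t : ℂ) * z)

/-- The multiplication operator `M_g f = g f`. -/
def Mg (g f : ℂ → ℂ) : ℂ → ℂ := fun z => g z * f z

/-! The identity is checked by differentiating: `S_g` and `T_g` are primitives (vanishing at `0`)
of `f' g` and `f g'`, and integrating `(g h)' = h' g + h g'` gives `S_g h + T_g h = g h` when
`h 0 = 0`. Hence `T_g S_g h` and `(S_g − T_g) T_g h` both vanish at `0` and have derivative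
`g' (g h − T_g h)`, so they agree for every such `h`; the theorem follows by induction on `m`,
since all the `S_g^m f` again vanish at `0`. -/

open Set Filter Topology

noncomputable def radialIntegral (u : ℂ → ℂ) (z : ℂ) : ℂ :=
  z * ∫ t in (0:ℝ)..1, u ((t : ℂ) * z)

section RadialIntegral

variable {r : ℝ} {z : ℂ}

lemma ofReal_mul_mem_ball (hz : z ∈ ball (0:ℂ) r) {t : ℝ} (ht : t ∈ Icc (0:ℝ) 1) :
    (t : ℂ) * z ∈ ball (0:ℂ) r := by
  simpa [Complex.real_smul] using
    (convex_ball (0:ℂ) r).smul_mem_of_zero_mem (mem_ball_self ((dist_nonneg).trans_lt hz)) hz ht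

@[simp]
lemma radialIntegral_zero_right (u : ℂ → ℂ) : radialIntegral u 0 = 0 := by
  simp [radialIntegral]

lemma radialIntegral_eq_sub {u F : ℂ → ℂ} (hu : ContinuousOn u (ball 0 r))
    (hF : ∀ w ∈ ball (0:ℂ) r, HasDerivAt F (u w) w) (hz : z ∈ ball (0:ℂ) r) :
    radialIntegral u z = F z - F 0 := by
  have hmaps : MapsTo (fun t : ℝ => (t : ℂ) * z) (uIcc 0 1) (ball 0 r) := fun t ht =>
    ofReal_mul_mem_ball hz (by rwa [uIcc_of_le zero_le_one] at ht)
  have hderiv : ∀ t ∈ uIcc (0:ℝ) 1,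
      HasDerivAt (fun s : ℝ => F ((s : ℂ) * z)) (u ((t : ℂ) * z) * z) t := fun t ht =>
    ((hF _ (hmaps ht)).comp (t : ℂ) ((hasDerivAt_id (t : ℂ)).mul_const z)).comp_ofReal
      |>.congr_deriv (by simp)
  have hint : IntervalIntegrable (fun t : ℝ => u ((t : ℂ) * z) * z) volume 0 1 :=
    ((hu.comp (by fun_prop) hmaps).mul continuousOn_const).intervalIntegrable
  rw [radialIntegral, mul_comm, ← intervalIntegral.integral_mul_const,
    intervalIntegral.integral_eq_sub_of_hasDerivAt hderiv hint]
  simp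

lemma hasDerivAt_radialIntegral {u : ℂ → ℂ} (hu : DifferentiableOn ℂ u (ball 0 r))
    (hz : z ∈ ball (0:ℂ) r) : HasDerivAt (radialIntegral u) (u z) z := by
  obtain ⟨F, hF⟩ := hu.isExactOn_ball
  have hloc : (fun w => F w - F 0) =ᶠ[𝓝 z] radialIntegral u :=
    eventually_of_mem (isOpen_ball.mem_nhds hz) fun w hw =>
      (radialIntegral_eq_sub hu.continuousOn hF hw).symm
  exact ((hF z hz).sub_const (F 0)).congr_of_eventuallyEq hloc.symm

lemma radialIntegral_congr {u v : ℂ → ℂ} (huv : EqOn u v (ball 0 r)) :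
    EqOn (radialIntegral u) (radialIntegral v) (ball 0 r) := fun z hz => by
  refine congrArg (z * ·) (intervalIntegral.integral_congr fun t ht => ?_)
  exact huv (ofReal_mul_mem_ball hz (by rwa [uIcc_of_le zero_le_one] at ht))

end RadialIntegral

lemma eqOn_ball_of_hasDerivAt {r : ℝ} {F G w : ℂ → ℂ}
    (hF : ∀ z ∈ ball (0:ℂ) r, HasDerivAt F (w z) z)
    (hG : ∀ z ∈ ball (0:ℂ) r, HasDerivAt G (w z) z) (h0 : F 0 = G 0) :
    EqOn F G (ball 0 r) := fun _ hz =>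
  isOpen_ball.eqOn_of_deriv_eq (convex_ball 0 r).isPreconnected
    (fun x hx => (hF x hx).differentiableAt.differentiableWithinAt)
    (fun x hx => (hG x hx).differentiableAt.differentiableWithinAt)
    (fun x hx => (hF x hx).deriv.trans (hG x hx).deriv.symm)
    (mem_ball_self (dist_nonneg.trans_lt hz)) h0 hz

section Paraproducts

variable {r : ℝ} {g h u v : ℂ → ℂ}

lemma Tg_eq_radialIntegral (g f : ℂ → ℂ) : Tg g f = radialIntegral (fun w => f w * deriv g w) :=
  rfl

lemma Sg_eq_radialIntegral (g f : ℂ → ℂ) : Sg g f = radialIntegral (fun w => deriv f w * g w) :=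
  rfl

@[simp]
lemma Tg_apply_zero (g f : ℂ → ℂ) : Tg g f 0 = 0 := by simp [Tg]

@[simp]
lemma Sg_apply_zero (g f : ℂ → ℂ) : Sg g f 0 = 0 := by simp [Sg]

lemma hasDerivAt_Tg (hg : DifferentiableOn ℂ g (ball 0 r)) (hh : DifferentiableOn ℂ h (ball 0 r))
    {z : ℂ} (hz : z ∈ ball (0:ℂ) r) : HasDerivAt (Tg g h) (h z * deriv g z) z :=
  hasDerivAt_radialIntegral (hh.mul (hg.deriv isOpen_ball)) hz

lemma hasDerivAt_Sg (hg : DifferentiableOn ℂ g (ball 0 r)) (hh : DifferentiableOn ℂ h (ball 0 r))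
    {z : ℂ} (hz : z ∈ ball (0:ℂ) r) : HasDerivAt (Sg g h) (deriv h z * g z) z :=
  hasDerivAt_radialIntegral ((hh.deriv isOpen_ball).mul hg) hz

lemma differentiableOn_Tg (hg : DifferentiableOn ℂ g (ball 0 r))
    (hh : DifferentiableOn ℂ h (ball 0 r)) : DifferentiableOn ℂ (Tg g h) (ball 0 r) :=
  fun _ hz => (hasDerivAt_Tg hg hh hz).differentiableAt.differentiableWithinAt

lemma differentiableOn_Sg (hg : DifferentiableOn ℂ g (ball 0 r))
    (hh : DifferentiableOn ℂ h (ball 0 r)) : DifferentiableOn ℂ (Sg g h) (ball 0 r) :=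
  fun _ hz => (hasDerivAt_Sg hg hh hz).differentiableAt.differentiableWithinAt

lemma Tg_congr (huv : EqOn u v (ball 0 r)) : EqOn (Tg g u) (Tg g v) (ball 0 r) := by
  rw [Tg_eq_radialIntegral, Tg_eq_radialIntegral]
  exact radialIntegral_congr fun _ hw => by simp only [huv hw]

lemma Sg_congr (huv : EqOn u v (ball 0 r)) : EqOn (Sg g u) (Sg g v) (ball 0 r) := by
  rw [Sg_eq_radialIntegral, Sg_eq_radialIntegral]
  exact radialIntegral_congr fun _ hw => by simp only [huv.deriv isOpen_ball hw]

lemma Sg_add_Tg (hg : DifferentiableOn ℂ g (ball 0 r)) (hh : DifferentiableOn ℂ h (ball 0 r))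
    (hh0 : h 0 = 0) : EqOn (Sg g h + Tg g h) (g * h) (ball 0 r) :=
  eqOn_ball_of_hasDerivAt (fun _ hz => (hasDerivAt_Sg hg hh hz).add (hasDerivAt_Tg hg hh hz))
    (fun z hz => ((hg.differentiableAt (isOpen_ball.mem_nhds hz)).hasDerivAt.mul
      (hh.differentiableAt (isOpen_ball.mem_nhds hz)).hasDerivAt).congr_deriv (by ring))
    (by simp [hh0])

lemma Tg_Sg_eqOn (hg : DifferentiableOn ℂ g (ball 0 r)) (hh : DifferentiableOn ℂ h (ball 0 r))
    (hh0 : h 0 = 0) : EqOn (Tg g (Sg g h)) (Sg g (Tg g h) - Tg g (Tg g h)) (ball 0 r) := by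
  refine eqOn_ball_of_hasDerivAt (fun _ hz => hasDerivAt_Tg hg (differentiableOn_Sg hg hh) hz)
    (fun z hz => ?_) (by simp)
  have hT := differentiableOn_Tg hg hh
  have hSTT := (hasDerivAt_Sg hg hT hz).sub (hasDerivAt_Tg hg hT hz)
  rw [(hasDerivAt_Tg hg hh hz).deriv] at hSTT
  have hparts : Sg g h z = g z * h z - Tg g h z := eq_sub_of_add_eq (Sg_add_Tg hg hh hh0 hz)
  exact hSTT.congr_deriv (by rw [hparts]; ring)

lemma Sg_sub_Tg_congr (huv : EqOn u v (ball 0 r)) :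
    EqOn (Sg g u - Tg g u) (Sg g v - Tg g v) (ball 0 r) := fun _ hz => by
  simp only [Pi.sub_apply, Sg_congr huv hz, Tg_congr huv hz]

lemma differentiableOn_iterate_Sg_and_apply_zero (hg : DifferentiableOn ℂ g (ball 0 r))
    (hh : DifferentiableOn ℂ h (ball 0 r)) (hh0 : h 0 = 0) (m : ℕ) :
    DifferentiableOn ℂ ((Sg g)^[m] h) (ball 0 r) ∧ (Sg g)^[m] h 0 = 0 := by
  induction m with
  | zero => exact ⟨hh, hh0⟩
  | succ m ih =>
    rw [Function.iterate_succ_apply']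
    exact ⟨differentiableOn_Sg hg ih.1, Sg_apply_zero g _⟩

end Paraproducts

/-- For `f` holomorphic with `f 0 = 0`, `T_g S_g^m f = (S_g − T_g)^m T_g f`. -/
theorem stmt_5 (g f : ℂ → ℂ) (hg : DifferentiableOn ℂ g (Metric.ball 0 1))
    (hf : DifferentiableOn ℂ f (Metric.ball 0 1)) (hf0 : f 0 = 0) (m : ℕ) :
    ∀ z ∈ Metric.ball (0:ℂ) 1,
      Tg g ((Sg g)^[m] f) z = (fun h => Sg g h - Tg g h)^[m] (Tg g f) z := by
  induction m with
  | zero => exact fun _ _ => rfl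
  | succ m ih =>
    intro z hz
    obtain ⟨hSmf, hSmf0⟩ := differentiableOn_iterate_Sg_and_apply_zero hg hf hf0 m
    rw [Function.iterate_succ_apply', Function.iterate_succ_apply']
    exact (Tg_Sg_eqOn hg hSmf hSmf0 hz).trans (Sg_sub_Tg_congr ih hz)
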